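/- Let f = [[0,0],[1,0]] and e = [[0,1],[0,0]] in 𝔰𝔩₂(ℂ), let 𝔟 be the set of upper-triangular trace-zero matrices, and let N = {[[1,x],[0,1]] : x ∈ ℂ} be the unipotent upper-triangular subgroup. Then the action map N × (f + ℂe) → f + 𝔟, (u, y) ↦ u y u⁻¹, is a bijection. -/
import Mathlib

lemma key (x t : ℂ) :
    !![1, x; 0, 1] * (!![0, 0; 1, 0] + t • !![0, 1; 0, 0]) * (!![1, x; 0, 1])⁻¹
      = !![x, t - x^2; 1, -x] := by
  have hinv : (!![1, x; 0, 1] : Matrix (Fin 2) (Fin 2) ℂ)⁻¹ = !![1, -x; 0, 1] := by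
    apply Matrix.inv_eq_right_inv
    simp [Matrix.mul_fin_two, Matrix.one_fin_two]
  rw [hinv]
  ext i j
  fin_cases i <;> fin_cases j <;>
    simp [Matrix.mul_apply, Fin.sum_univ_two] <;> ring

/-- Let `f = [[0,0],[1,0]]` and `e = [[0,1],[0,0]]` in `𝔰𝔩₂(ℂ)`, let `𝔟` be the set
of upper-triangular trace-zero matrices, so that `f + 𝔟` is the set of matrices
`m` with `m 1 0 = 1` and trace zero, and let `N = {[[1,x],[0,1]] : x ∈ ℂ}` be the
unipotent upper-triangular subgroup.  Then the action map
`N × (f + ℂe) → f + 𝔟`, `(u, y) ↦ u y u⁻¹`, is a bijection: every conjugate lands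
in `f + 𝔟`, and every element of `f + 𝔟` is the conjugate of a unique pair. -/
theorem kostant_slice_sl2 :
    (∀ x t : ℂ,
        ((!![1, x; 0, 1] * (!![0, 0; 1, 0] + t • !![0, 1; 0, 0]) * (!![1, x; 0, 1])⁻¹ :
          Matrix (Fin 2) (Fin 2) ℂ)) 1 0 = 1 ∧
        (!![1, x; 0, 1] * (!![0, 0; 1, 0] + t • !![0, 1; 0, 0]) * (!![1, x; 0, 1])⁻¹ :
          Matrix (Fin 2) (Fin 2) ℂ).trace = 0) ∧
    (∀ m : Matrix (Fin 2) (Fin 2) ℂ, m 1 0 = 1 → m.trace = 0 →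
        ∃! p : ℂ × ℂ,
          !![1, p.1; 0, 1] * (!![0, 0; 1, 0] + p.2 • !![0, 1; 0, 0]) *
            (!![1, p.1; 0, 1])⁻¹ = m) := by
  constructor
  · intro x t
    rw [key]
    constructor
    · simp
    · simp [Matrix.trace_fin_two]
  · intro m h10 htr
    rw [Matrix.trace_fin_two] at htr
    have h11 : m 1 1 = -(m 0 0) := by linear_combination htr
    have hm : m = !![m 0 0, m 0 1; 1, -(m 0 0)] := by
      conv_lhs => rw [Matrix.eta_fin_two m]
      rw [h10, h11]
    refine ⟨(m 0 0, m 0 1 + (m 0 0)^2), ?_, ?_⟩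
    · dsimp only
      rw [key, hm]
      norm_num
    · rintro ⟨x, t⟩ hp
      dsimp only at hp
      rw [key, hm] at hp
      have h00 := congrFun (congrFun hp 0) 0
      have h01 := congrFun (congrFun hp 0) 1
      simp at h00 h01
      subst h00
      simp
      linear_combination h01
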